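/- For every natural number n, if v is a von Neumann numeral and z is a Zermelo numeral (as hereditarily finite sets), then Pⁿ(TC({v})) ∩ Pⁿ(TC({z})) ⊆ P^{n+2}(∅), where P denotes the power set operation iterated n times and TC denotes transitive closure. -/

import Mathlib

/-!
Powerset commutes with intersections and is monotone, so `Pⁿ(A) ∩ Pⁿ(B) = Pⁿ(A ∩ B)` and the
claim reduces to `n = 0`. The class of von Neumann numerals and that of Zermelo numerals are both
closed under membership, hence contain `TC({v})` and `TC({z})` respectively; and a set that is a
numeral of both kinds is `∅` or `{∅}`, both members of `P²(∅)`.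
-/

open ZFSet

/-- The `n`-th von Neumann numeral: `0 = ∅`, `S x = x ∪ {x}`. -/
def vonNeumann : ℕ → ZFSet
  | 0 => ∅
  | n + 1 => insert (vonNeumann n) (vonNeumann n)

/-- The `n`-th Zermelo numeral: `0 = ∅`, `σ x = {x}`. -/
def zermelo : ℕ → ZFSet
  | 0 => ∅
  | n + 1 => {zermelo n}

/-- The `n`-fold iterated union of a set. -/
def iterUnion : ℕ → ZFSet → ZFSet
  | 0, A => A
  | n + 1, A => ⋃₀ iterUnion n A

/-- The transitive closure of `A`: the smallest transitive set containing all
elements of `A`. -/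
noncomputable def TClos (A : ZFSet) : ZFSet :=
  ⋃₀ ZFSet.range fun n : ℕ => iterUnion n A

/-- The `n`-fold iterated power set. -/
def iterPow : ℕ → ZFSet → ZFSet
  | 0, A => A
  | n + 1, A => ZFSet.powerset (iterPow n A)

lemma iterPow_add (m n : ℕ) (A : ZFSet) : iterPow (m + n) A = iterPow m (iterPow n A) := by
  induction m with
  | zero => simp [iterPow]
  | succ m ih => rw [Nat.add_right_comm, iterPow, ih, iterPow]

lemma iterPow_mono (n : ℕ) {A B : ZFSet} (h : A ⊆ B) : iterPow n A ⊆ iterPow n B := by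
  induction n with
  | zero => exact h
  | succ n ih => exact fun x hx => mem_powerset.2 ((mem_powerset.1 hx).trans ih)

lemma iterPow_inter (n : ℕ) (A B : ZFSet) :
    iterPow n A ∩ iterPow n B = iterPow n (A ∩ B) := by
  induction n with
  | zero => rfl
  | succ n ih =>
    ext x
    simp only [iterPow, mem_inter, mem_powerset, ← ih, subset_def]
    exact ⟨fun h y hy => ⟨h.1 hy, h.2 hy⟩, fun h => ⟨fun y hy => (h hy).1, fun y hy => (h hy).2⟩⟩

lemma mem_TClos {A x : ZFSet} : x ∈ TClos A ↔ ∃ n, x ∈ iterUnion n A := by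
  simp [TClos]

lemma forall_mem_TClos_of_mem_closed {p : ZFSet → Prop} (hp : ∀ x y, p x → y ∈ x → p y)
    {A : ZFSet} (hA : ∀ x ∈ A, p x) : ∀ x ∈ TClos A, p x := by
  suffices ∀ n, ∀ x ∈ iterUnion n A, p x by
    intro x hx
    obtain ⟨n, hn⟩ := mem_TClos.1 hx
    exact this n x hn
  intro n
  induction n with
  | zero => exact hA
  | succ n ih =>
    intro x hx
    obtain ⟨y, hy, hxy⟩ := mem_sUnion.1 hx
    exact hp y x (ih y hy) hxy

lemma exists_eq_vonNeumann_of_mem {x : ZFSet} : ∀ {j : ℕ}, x ∈ _root_.vonNeumann j →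
    ∃ i, x = _root_.vonNeumann i
  | 0, h => absurd h (notMem_empty x)
  | j + 1, h => (mem_insert_iff.1 h).elim (⟨j, ·⟩) exists_eq_vonNeumann_of_mem

lemma exists_eq_zermelo_of_mem {x : ZFSet} : ∀ {j : ℕ}, x ∈ zermelo j → ∃ i, x = zermelo i
  | 0, h => absurd h (notMem_empty x)
  | j + 1, h => ⟨j, mem_singleton.1 h⟩

lemma vonNeumann_mem_succ (j : ℕ) : _root_.vonNeumann j ∈ _root_.vonNeumann (j + 1) :=
  mem_insert _ _

lemma eq_of_mem_zermelo {i : ℕ} {x y : ZFSet} (hx : x ∈ zermelo i) (hy : y ∈ zermelo i) :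
    x = y := by
  cases i with
  | zero => exact absurd hx (notMem_empty x)
  | succ i => exact (mem_singleton.1 hx).trans (mem_singleton.1 hy).symm

/-- `vonNeumann (j + 2)` has the two distinct members `vonNeumann (j + 1)` and `vonNeumann j`,
whereas a Zermelo numeral has at most one member. -/
lemma le_one_of_vonNeumann_eq_zermelo {j i : ℕ} (h : _root_.vonNeumann j = zermelo i) :
    j ≤ 1 := by
  by_contra! hj
  obtain ⟨j, rfl⟩ := Nat.exists_eq_add_of_le' hj
  have h₁ := vonNeumann_mem_succ (j + 1)
  have h₀ : _root_.vonNeumann j ∈ _root_.vonNeumann (j + 2) :=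
    mem_insert_of_mem _ (vonNeumann_mem_succ j)
  rw [h] at h₀ h₁
  have := vonNeumann_mem_succ j
  rw [eq_of_mem_zermelo h₁ h₀] at this
  exact mem_irrefl _ this

lemma vonNeumann_mem_iterPow_two_empty {j : ℕ} (hj : j ≤ 1) :
    _root_.vonNeumann j ∈ iterPow 2 (∅ : ZFSet) := by
  interval_cases j <;> simp [iterPow, _root_.vonNeumann, subset_def]

lemma exists_eq_vonNeumann_of_mem_TClos {k : ℕ} {x : ZFSet}
    (hx : x ∈ TClos {_root_.vonNeumann k}) : ∃ j, x = _root_.vonNeumann j :=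
  forall_mem_TClos_of_mem_closed (p := (∃ j, · = _root_.vonNeumann j))
    (fun _ _ ⟨_, hx⟩ hy => exists_eq_vonNeumann_of_mem (hx ▸ hy))
    (fun _ h => ⟨k, mem_singleton.1 h⟩) x hx

lemma exists_eq_zermelo_of_mem_TClos {m : ℕ} {x : ZFSet} (hx : x ∈ TClos {zermelo m}) :
    ∃ i, x = zermelo i :=
  forall_mem_TClos_of_mem_closed (p := (∃ i, · = zermelo i))
    (fun _ _ ⟨_, hx⟩ hy => exists_eq_zermelo_of_mem (hx ▸ hy))
    (fun _ h => ⟨m, mem_singleton.1 h⟩) x hx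

lemma TClos_vonNeumann_inter_TClos_zermelo_subset (k m : ℕ) :
    TClos {_root_.vonNeumann k} ∩ TClos {zermelo m} ⊆ iterPow 2 (∅ : ZFSet) := by
  intro x hx
  obtain ⟨hv, hz⟩ := mem_inter.1 hx
  obtain ⟨j, rfl⟩ := exists_eq_vonNeumann_of_mem_TClos hv
  obtain ⟨i, hi⟩ := exists_eq_zermelo_of_mem_TClos hz
  exact vonNeumann_mem_iterPow_two_empty (le_one_of_vonNeumann_eq_zermelo hi)

/-- The VN–Z Splitting Lemma: for every `n`, if `v` is a von Neumann numeral
and `z` is a Zermelo numeral, then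
`Pⁿ(TC({v})) ∩ Pⁿ(TC({z})) ⊆ P^{n+2}(∅)`. -/
theorem vn_z_splitting (n k m : ℕ) :
    iterPow n (TClos {_root_.vonNeumann k}) ∩ iterPow n (TClos {zermelo m}) ⊆
      iterPow (n + 2) (∅ : ZFSet) := by
  rw [iterPow_inter, iterPow_add]
  exact iterPow_mono n (TClos_vonNeumann_inter_TClos_zermelo_subset k m)
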